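/- Let H be a graph, let s and n be positive integers, and let H^(s) be the s-fold blow-up of H. Then IR(H^(s), K_{1,n}) ≤ s·(|E(H)|·(n−1) + |V(H)|). -/

import Mathlib

/-! Order `V(H)` and let `d⁻(v)` be the number of neighbours of `v` below it. The host graph is
the blow-up of `H` in which `v` gets `s + d⁻(v)·s(n-1)` copies; it has at most
`s(|E(H)|(n-1) + |V(H)|)` vertices. In a red/blue colouring, a vertex with `n` blue edges into a
neighbouring class spans an induced blue `K_{1,n}`, as classes are independent. Otherwise every
vertex has at most `n-1` blue neighbours in each class, and `s` vertices are chosen in each class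
greedily along the order: the blue neighbours of the `d⁻(v)·s` vertices already chosen in the
lower neighbouring classes exclude at most `d⁻(v)·s(n-1)` copies of `v`, which leaves `s` of
them, and the chosen vertices induce a red `H^(s)`. -/

open SimpleGraph

def ArrowsInd {V α β : Type*} (F : SimpleGraph V) (H : SimpleGraph α) (G : SimpleGraph β) : Prop :=
  ∀ c : Sym2 V → Bool,
    (∃ f : H ↪g F, ∀ u v, H.Adj u v → c s(f u, f v) = true) ∨
    (∃ g : G ↪g F, ∀ u v, G.Adj u v → c s(g u, g v) = false)

noncomputable def IR {α β : Type*} (H : SimpleGraph α) (G : SimpleGraph β) : ℕ :=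
  sInf {N : ℕ | ∃ F : SimpleGraph (Fin N), ArrowsInd F H G}

def StarGraph (n : ℕ) : SimpleGraph (Fin 1 ⊕ Fin n) := completeBipartiteGraph (Fin 1) (Fin n)

open Finset

theorem ArrowsInd.of_embedding {V V' α β : Type*} {F : SimpleGraph V} {F' : SimpleGraph V'}
    {H : SimpleGraph α} {G : SimpleGraph β} (h : ArrowsInd F H G) (e : F ↪g F') :
    ArrowsInd F' H G := by
  intro c
  rcases h (fun x => c (x.map e)) with ⟨f, hf⟩ | ⟨g, hg⟩
  · exact .inl ⟨f.trans e, hf⟩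
  · exact .inr ⟨g.trans e, hg⟩

theorem ArrowsInd.IR_le_card {V α β : Type*} [Fintype V] {F : SimpleGraph V} {H : SimpleGraph α}
    {G : SimpleGraph β} (h : ArrowsInd F H G) : IR H G ≤ Fintype.card V :=
  Nat.sInf_le ⟨_, h.of_embedding (Iso.map (Fintype.equivFin V) F).toEmbedding⟩

theorem exists_subset_card_eq_forall_not_rel {W : Type*} [DecidableEq W] (B : W → W → Prop)
    [DecidableRel B] {C Y : Finset W} {s m : ℕ} (hB : ∀ y ∈ Y, #{x ∈ C | B y x} ≤ m)
    (hC : s + #Y * m ≤ #C) : ∃ t ⊆ C, #t = s ∧ ∀ y ∈ Y, ∀ x ∈ t, ¬B y x := by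
  set D := Y.biUnion fun y => {x ∈ C | B y x}
  have hD : #D ≤ #Y * m := card_biUnion_le_card_mul _ _ _ hB
  obtain ⟨t, htC, ht⟩ := exists_subset_card_eq (s := C \ D) (n := s)
    (by have := le_card_sdiff D C; omega)
  refine ⟨t, htC.trans sdiff_subset, ht, fun y hy x hx hyx => ?_⟩
  have hxD := mem_sdiff.mp (htC hx)
  exact hxD.2 (mem_biUnion.mpr ⟨y, hy, mem_filter.mpr ⟨hxD.1, hyx⟩⟩)

theorem exists_fiber_subsets_forall_not_rel {α W : Type*} [Fintype α] [LinearOrder α]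
    [Fintype W] [DecidableEq W] (p : W → α) (R : α → α → Prop) [DecidableRel R]
    (B : W → W → Prop) [DecidableRel B] (s m : ℕ)
    (hB : ∀ y u, R (p y) u → #{x | p x = u ∧ B y x} ≤ m)
    (hp : ∀ v, s + #{u | u < v ∧ R u v} * (s * m) ≤ #{x | p x = v}) :
    ∃ T : α → Finset W, ∀ v, (∀ x ∈ T v, p x = v) ∧ #(T v) = s ∧
      ∀ u < v, R u v → ∀ y ∈ T u, ∀ x ∈ T v, ¬B y x := by
  suffices ∀ S : Finset α, ∃ T : α → Finset W,
      ∀ v ∈ S, (∀ x ∈ T v, p x = v) ∧ #(T v) = s ∧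
        ∀ u ∈ S, u < v → R u v → ∀ y ∈ T u, ∀ x ∈ T v, ¬B y x by
    obtain ⟨T, hT⟩ := this univ
    exact ⟨T, fun v =>
      (hT v (mem_univ v)).imp_right (.imp_right fun h u => h u (mem_univ u))⟩
  intro S
  induction S using induction_on_max with
  | empty => exact ⟨fun _ => ∅, by simp⟩
  | insert a S hlt ih =>
    obtain ⟨T, hT⟩ := ih
    set Y := {u ∈ S | R u a}.biUnion T
    have hY : #Y ≤ #{u | u < a ∧ R u a} * s := by
      refine (card_biUnion_le_card_mul _ _ _
        fun u hu => (hT u (mem_filter.mp hu).1).2.1.le).trans ?_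
      gcongr
      intro u
      simp only [mem_filter, mem_univ, true_and]
      exact fun hu => ⟨hlt u hu.1, hu.2⟩
    have hYB : ∀ y ∈ Y, #{x ∈ {x | p x = a} | B y x} ≤ m := by
      intro y hy
      obtain ⟨u, hu, hyu⟩ := mem_biUnion.mp hy
      rw [filter_filter]
      exact hB y a ((hT u (mem_filter.mp hu).1).1 y hyu ▸ (mem_filter.mp hu).2)
    obtain ⟨t, htC, hts, htB⟩ := exists_subset_card_eq_forall_not_rel B hYB
      (le_trans (by rw [← mul_assoc]; gcongr) (hp a))
    refine ⟨Function.update T a t, fun v hv => ?_⟩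
    rcases mem_insert.mp hv with rfl | hvS
    · rw [Function.update_self]
      refine ⟨fun x hx => (mem_filter.mp (htC hx)).2, hts, fun u hu huv hR y hy x hx => ?_⟩
      rcases mem_insert.mp hu with rfl | huS
      · exact absurd huv (lt_irrefl _)
      · rw [Function.update_of_ne (hlt u huS).ne] at hy
        exact htB y (mem_biUnion.mpr ⟨u, mem_filter.mpr ⟨huS, hR⟩, hy⟩) x hx
    · rw [Function.update_of_ne (hlt v hvS).ne]
      refine (hT v hvS).imp_right (.imp_right fun h u hu huv => ?_)
      rcases mem_insert.mp hu with rfl | huS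
      · exact absurd (huv.trans (hlt v hvS)) (lt_irrefl _)
      · rw [Function.update_of_ne (hlt u huS).ne]
        exact h u huS huv

theorem exists_starGraph_embedding {V : Type*} {F : SimpleGraph V} {n : ℕ} (y : V)
    (t : Finset V) (ht : #t = n) (hadj : ∀ x ∈ t, F.Adj y x)
    (hind : ∀ x ∈ t, ∀ x' ∈ t, ¬F.Adj x x') :
    ∃ g : StarGraph n ↪g F, g (.inl 0) = y ∧ ∀ i, g (.inr i) ∈ t := by
  let e := (t.equivFinOfCardEq ht).symm
  let g : Fin 1 ⊕ Fin n → V := Sum.elim (fun _ => y) (fun i => e i)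
  have hy : y ∉ t := fun h => (hadj y h).ne rfl
  have hg : Function.Injective g := by
    rintro (a | a) (b | b) h
    · exact congrArg _ (Subsingleton.elim a b)
    · exact (hy ((show y = e b from h) ▸ (e b).2)).elim
    · exact (hy ((show y = e a from h.symm) ▸ (e a).2)).elim
    · exact congrArg _ (e.injective (Subtype.ext h))
  refine ⟨⟨⟨g, hg⟩, ?_⟩, rfl, fun i => (e i).2⟩
  rintro (a | a) (b | b) <;> simp only [Function.Embedding.coeFn_mk]
  · simp [g, StarGraph]
  · simp [g, StarGraph, hadj]
  · simp [g, StarGraph, (hadj _ (e a).2).symm]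
  · simp [g, StarGraph, hind]

theorem exists_comap_fst_embedding {α W : Type*} (H : SimpleGraph α) {p : W → α} {s : ℕ}
    (T : α → Finset W) (hT : ∀ v, ∀ x ∈ T v, p x = v) (hcard : ∀ v, #(T v) = s) :
    ∃ f : H.comap (Prod.fst : α × Fin s → α) ↪g H.comap p, ∀ x, f x ∈ T x.1 := by
  let e v := ((T v).equivFinOfCardEq (hcard v)).symm
  let f : α × Fin s → W := fun x => e x.1 x.2
  have hf : ∀ x, p (f x) = x.1 := fun x => hT _ _ (e x.1 x.2).2
  refine ⟨⟨⟨f, ?_⟩, ?_⟩, fun x => (e x.1 x.2).2⟩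
  · rintro ⟨v, i⟩ ⟨w, j⟩ h
    obtain rfl : v = w := (hf (v, i)).symm.trans ((congrArg p h).trans (hf (w, j)))
    exact congrArg _ ((e v).injective (Subtype.ext h))
  · intro x y
    change H.Adj (p (f x)) (p (f y)) ↔ _
    rw [hf, hf, comap_adj]

theorem arrowsInd_comap_of_card_fiber {α W : Type*} [Fintype α] [LinearOrder α] [Fintype W]
    (H : SimpleGraph α) [DecidableRel H.Adj] (p : W → α) (s n : ℕ)
    (hp : ∀ v, s + #{u | u < v ∧ H.Adj u v} * (s * (n - 1)) ≤ #{x | p x = v}) :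
    ArrowsInd (H.comap p) (H.comap (Prod.fst : α × Fin s → α)) (StarGraph n) := by
  classical
  intro c
  by_cases hstar : ∃ y u, H.Adj (p y) u ∧ n ≤ #{x | p x = u ∧ c s(y, x) = false}
  · obtain ⟨y, u, hyu, hn⟩ := hstar
    obtain ⟨t, hts, ht⟩ := exists_subset_card_eq hn
    have hxt : ∀ x ∈ t, p x = u ∧ c s(y, x) = false := fun x hx => by simpa using hts hx
    obtain ⟨g, hgy, hgt⟩ := exists_starGraph_embedding (F := H.comap p) y t ht
      (fun x hx => by simpa [(hxt x hx).1] using hyu)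
      (fun x hx x' hx' => by simp [(hxt x hx).1, (hxt x' hx').1])
    refine .inr ⟨g, ?_⟩
    rintro (a | a) (b | b) hab
    · simp [StarGraph] at hab
    · rw [Subsingleton.elim a 0, hgy]; exact (hxt _ (hgt b)).2
    · rw [Subsingleton.elim b 0, hgy, Sym2.eq_swap]; exact (hxt _ (hgt a)).2
    · simp [StarGraph] at hab
  · push Not at hstar
    obtain ⟨T, hT⟩ := exists_fiber_subsets_forall_not_rel p H.Adj
      (fun y x => c s(y, x) = false) s (n - 1) (fun y u h => Nat.le_pred_of_lt (hstar y u h)) hp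
    obtain ⟨f, hf⟩ := exists_comap_fst_embedding H T (fun v => (hT v).1) (fun v => (hT v).2.1)
    refine .inl ⟨f, fun x y hxy => ?_⟩
    replace hxy : H.Adj x.1 y.1 := hxy
    rcases lt_or_gt_of_ne hxy.ne with h | h
    · simpa using (hT y.1).2.2 x.1 h hxy (f x) (hf x) (f y) (hf y)
    · rw [Sym2.eq_swap]
      simpa using (hT x.1).2.2 y.1 h hxy.symm (f y) (hf y) (f x) (hf x)

theorem card_filter_sigma_fst_eq {α : Type*} [Fintype α] [DecidableEq α] (b : α → ℕ)
    (v : α) :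
    #{x : Σ a, Fin (b a) | x.1 = v} = b v := by
  rw [← card_fin (b v), ← card_map (Function.Embedding.sigmaMk (β := fun a => Fin (b a)) v)]
  congr 1
  ext ⟨a, i⟩
  simp only [mem_filter, mem_univ, true_and, mem_map, Function.Embedding.sigmaMk_apply,
    Sigma.mk.inj_iff]
  exact ⟨by rintro rfl; exact ⟨i, rfl, .rfl⟩, by rintro ⟨j, rfl, -⟩; rfl⟩

theorem sum_card_lt_adj_le_card_edgeFinset {α : Type*} [Fintype α] [LinearOrder α]
    (H : SimpleGraph α) [DecidableRel H.Adj] :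
    ∑ v, #{u | u < v ∧ H.Adj u v} ≤ #H.edgeFinset := by
  have hpairs :
      ∑ v, #{u | u < v ∧ H.Adj u v} = #{x : α × α | x.1 < x.2 ∧ H.Adj x.1 x.2} := by
    simp only [card_filter, Fintype.sum_prod_type_right]
  rw [hpairs]
  refine card_le_card_of_injOn (fun x => s(x.1, x.2)) (fun x hx => ?_) ?_
  · simpa using (mem_filter.mp hx).2.2
  · rintro ⟨a, b⟩ hab ⟨c, d⟩ hcd h
    simp only [coe_filter, mem_univ, true_and, Set.mem_ofPred_eq] at hab hcd
    rcases Sym2.eq_iff.mp h with ⟨rfl, rfl⟩ | ⟨rfl, rfl⟩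
    · rfl
    · exact absurd (hab.1.trans hcd.1) (lt_irrefl _)

theorem IR_blowup_le_general (k s n : ℕ) (H : SimpleGraph (Fin k)) :
    IR (H.comap (Prod.fst : Fin k × Fin s → Fin k)) (StarGraph n)
      ≤ s * (Nat.card H.edgeSet * (n - 1) + k) := by
  classical
  let d : Fin k → ℕ := fun v => #{u | u < v ∧ H.Adj u v}
  let b v := s + d v * (s * (n - 1))
  have hF := arrowsInd_comap_of_card_fiber H (Sigma.fst : (Σ v, Fin (b v)) → Fin k) s n
    fun v => (card_filter_sigma_fst_eq b v).ge
  calc IR _ _ ≤ Fintype.card (Σ v, Fin (b v)) := hF.IR_le_card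
    _ = k * s + (∑ v, d v) * (s * (n - 1)) := by simp [b, sum_add_distrib, sum_mul]
    _ ≤ k * s + #H.edgeFinset * (s * (n - 1)) := by
      gcongr
      exact sum_card_lt_adj_le_card_edgeFinset H
    _ = s * (Nat.card H.edgeSet * (n - 1) + k) := by
      rw [edgeFinset_card, Nat.card_eq_fintype_card]
      ring

/-- for the s-fold blow-up H^(s) of H,
IR(H^(s), K_{1,n}) ≤ s·(|E(H)|·(n−1) + |V(H)|). -/
theorem IR_blowup_le (k s n : ℕ) (hs : 0 < s) (hn : 0 < n) (H : SimpleGraph (Fin k)) :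
    IR (H.comap (Prod.fst : Fin k × Fin s → Fin k)) (StarGraph n)
      ≤ s * (Nat.card H.edgeSet * (n - 1) + k) :=
  IR_blowup_le_general k s n H
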